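/- For all natural numbers n ≥ 1 and k with 0 ≤ k ≤ n−1, the higher-order Bernoulli numbers of negative order satisfy B_k^{(-n)} = (1/(n! · C(n+k,k))) · Σ_{j=0}^{n+k-1} E(n+k, j) · C(j, k), where E denotes the Eulerian numbers and C the ordinary binomial coefficient. (This is the corollary obtained by combining Gessel's relation S(n+k,n) = C(n+k,k) B_k^{(-n)} with the Eulerian-number expression for S(n+k,n).) -/

import Mathlib

/-!
Write `m = n + k`. Since `X * ∑ t^m/(m+1)! = exp - 1`, the Bernoulli side is
`k! [t^m] (exp - 1)^n`, and expanding `(exp - 1)^n` binomially gives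
`m! [t^m] (exp - 1)^n = Δⁿ xᵐ |_{x=0} = n! S(m, n)`; the last equality is obtained by
applying `Δⁿ` at `0` to Newton's expansion `xᵐ = ∑ᵢ i! S(m, i) C(x, i)`. This is Gessel's
relation `S(n + k, n) = C(n + k, k) B_k^{(-n)}`.

On the Eulerian side, apply `Δⁿ` at `0` to Worpitzky's identity
`xᵐ = ∑ⱼ E(m, j) C(x + j, m)`: since `Δⁿ C(x + j, n + k) = C(x + j, k)`, this gives
`n! S(n + k, n) = ∑ⱼ E(n + k, j) C(j, k)`. Worpitzky's identity follows by induction on `m`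
from the recurrence `E(m+1, j+1) = (j+2) E(m, j+1) + (m-j) E(m, j)` and from
`E(m, m+1) = 0` and (for `m ≥ 1`) `E(m, m) = 0`, both instances of the vanishing of the
`(m+1)`-st difference of a polynomial of degree `m`.
-/

open Finset

/-- The higher-order Bernoulli numbers of negative order `B_k^{(-n)}`, defined by the formal
exponential generating function `∑_{j≥0} B_j^{(-n)} t^j/j! = ((e^t - 1)/t)^n`, i.e. the
`n`-th power of the formal power series `∑_{m≥0} t^m/(m+1)!`. -/
noncomputable def bernoulliNegOrder (n k : ℕ) : ℚ :=
  (k.factorial : ℚ) *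
    PowerSeries.coeff (R := ℚ) k ((PowerSeries.mk fun m => (1 : ℚ) / (m + 1).factorial) ^ n)

/-- The Eulerian numbers `E(n,k) = ∑_{j=0}^k (-1)^j C(n+1,j) (k+1-j)^n`. -/
def eulerianNum (n k : ℕ) : ℤ :=
  ∑ j ∈ Finset.range (k + 1), (-1 : ℤ) ^ j * ((n + 1).choose j : ℤ) * ((k + 1 - j : ℕ) : ℤ) ^ n

open PowerSeries
open scoped Nat

theorem cast_choose_succ_right_eq {R : Type*} [Ring R] (n k : ℕ) :
    (n.choose (k + 1) : R) * (k + 1) = n.choose k * (n - k) := by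
  rcases le_or_gt k n with h | h
  · have := congrArg (Nat.cast : ℕ → R) (Nat.choose_succ_right_eq n k)
    push_cast [h] at this
    exact this
  · rw [Nat.choose_eq_zero_of_lt h, Nat.choose_eq_zero_of_lt (by omega)]
    simp

theorem natCast_pow_eq_sum_stirlingSecond_mul_choose (m x : ℕ) :
    (x : ℤ) ^ m = ∑ n ∈ range (m + 1), (n ! * Nat.stirlingSecond m n : ℤ) * x.choose n := by
  induction m with
  | zero => simp
  | succ m ih =>
    have hmul (n : ℕ) : (x : ℤ) * x.choose n = (n + 1) * x.choose (n + 1) + n * x.choose n := by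
      linear_combination -(cast_choose_succ_right_eq (R := ℤ) x n)
    have hshift : ∑ n ∈ range (m + 1), (n * n ! * Nat.stirlingSecond m n : ℤ) * x.choose n =
        ∑ n ∈ range (m + 1),
          ((n + 1) * (n + 1)! * Nat.stirlingSecond m (n + 1) : ℤ) * x.choose (n + 1) := by
      rw [sum_range_succ', sum_range_succ _ m, Nat.stirlingSecond_eq_zero_of_lt (lt_add_one m)]
      simp
    calc (x : ℤ) ^ (m + 1)
        = ∑ n ∈ range (m + 1), (n ! * Nat.stirlingSecond m n : ℤ) * (x * x.choose n) := by
          rw [pow_succ', ih, mul_sum]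
          exact sum_congr rfl fun n _ => by ring
      _ = ∑ n ∈ range (m + 1), (((n + 1)! * Nat.stirlingSecond m n : ℤ) * x.choose (n + 1) +
            (n * n ! * Nat.stirlingSecond m n : ℤ) * x.choose n) := by
          refine sum_congr rfl fun n _ => ?_
          rw [hmul, Nat.factorial_succ]
          push_cast
          ring
      _ = ∑ n ∈ range (m + 2), (n ! * Nat.stirlingSecond (m + 1) n : ℤ) * x.choose n := by
          rw [sum_add_distrib, hshift, sum_range_succ' _ (m + 1), ← sum_add_distrib]
          simp only [Nat.stirlingSecond_succ_succ, Nat.stirlingSecond_succ_zero]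
          push_cast
          simp only [mul_zero, zero_mul, add_zero]
          exact sum_congr rfl fun n _ => by ring

theorem fwdDiff_iter_natCast_pow_apply_zero (m n : ℕ) :
    (fwdDiff 1)^[n] (fun x : ℕ ↦ (x : ℤ) ^ m) 0 = n ! * Nat.stirlingSecond m n := by
  have hnewton : (fun x : ℕ ↦ (x : ℤ) ^ m) = ∑ i ∈ range (m + 1),
      (i ! * Nat.stirlingSecond m i : ℤ) • fun x : ℕ ↦ (x.choose i : ℤ) := by
    ext x
    simp [natCast_pow_eq_sum_stirlingSecond_mul_choose m x]
  rw [hnewton, fwdDiff_iter_finsetSum, Finset.sum_apply]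
  simp only [fwdDiff_iter_const_smul, Pi.smul_apply, fwdDiff_iter_choose_zero, smul_eq_mul,
    mul_ite, mul_one, mul_zero, sum_ite_eq, mem_range]
  split_ifs with h
  · rfl
  · simp [Nat.stirlingSecond_eq_zero_of_lt (not_lt.1 h)]

theorem X_mul_mk_one_div_factorial_succ :
    (X : ℚ⟦X⟧) * mk (fun m => (1 : ℚ) / (m + 1)!) = exp ℚ - 1 := by
  ext (_ | d) <;> simp [coeff_succ_X_mul, coeff_exp]

theorem factorial_mul_coeff_exp_sub_one_pow (m n : ℕ) :
    (m ! : ℚ) * coeff m ((exp ℚ - 1) ^ n) = n ! * Nat.stirlingSecond m n := by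
  have hΔ := congrArg (Int.cast : ℤ → ℚ) (fwdDiff_iter_natCast_pow_apply_zero m n)
  simp only [fwdDiff_iter_eq_sum_shift, smul_eq_mul, mul_one, zero_add] at hΔ
  push_cast at hΔ
  rw [← hΔ, sub_eq_add_neg, add_pow, map_sum, mul_sum]
  refine sum_congr rfl fun i _ => ?_
  have hC : ((-1) ^ (n - i) * n.choose i : ℚ⟦X⟧) = C ((-1 : ℚ) ^ (n - i) * n.choose i) := by
    simp
  rw [mul_assoc, hC, coeff_mul_C, exp_pow_eq_rescale_exp, coeff_rescale, coeff_exp,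
    Algebra.algebraMap_self, RingHom.id_apply]
  field_simp

theorem choose_mul_bernoulliNegOrder (n k : ℕ) :
    ((n + k).choose k : ℚ) * bernoulliNegOrder n k = Nat.stirlingSecond (n + k) n := by
  have hcoeff : coeff k (mk (fun m => (1 : ℚ) / (m + 1)!) ^ n) =
      coeff (n + k) ((exp ℚ - 1) ^ n) := by
    rw [← X_mul_mk_one_div_factorial_succ, mul_pow, add_comm, coeff_X_pow_mul]
  have hfac : ((n + k).choose k * k ! * n ! : ℚ) = (n + k)! := by
    exact_mod_cast
      Nat.add_sub_cancel n k ▸ Nat.choose_mul_factorial_mul_factorial (Nat.le_add_left k n)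
  rw [bernoulliNegOrder, hcoeff]
  refine mul_left_cancel₀ (by positivity : (n ! : ℚ) ≠ 0) ?_
  rw [← factorial_mul_coeff_exp_sub_one_pow, ← hfac]
  ring

theorem eulerianNum_eq_sum (m k : ℕ) :
    eulerianNum m k =
      ∑ l ∈ range (k + 1), (-1 : ℤ) ^ l * (m + 1).choose l * ((k + 1 : ℤ) - l) ^ m := by
  refine sum_congr rfl fun l hl => ?_
  rw [Nat.cast_sub (by rw [mem_range] at hl; omega)]
  push_cast
  rfl

theorem eulerianNum_zero_right (m : ℕ) : eulerianNum m 0 = 1 := by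
  simp [eulerianNum]

theorem sum_neg_one_pow_mul_choose_mul_sub_pow (m : ℕ) (c : ℤ) :
    ∑ l ∈ range (m + 2), (-1 : ℤ) ^ l * (m + 1).choose l * (c - l) ^ m = 0 := by
  have h := congrFun (fwdDiff_iter_pow_eq_zero_of_lt (R := ℤ) (lt_add_one m)) (c - (m + 1))
  rw [fwdDiff_iter_eq_sum_shift, ← sum_range_reflect, Pi.zero_apply] at h
  rw [← h]
  refine sum_congr rfl fun l hl => ?_
  have hl : l ≤ m + 1 := by rw [mem_range] at hl; omega
  rw [show m + 1 + 1 - 1 - l = m + 1 - l by omega, Nat.sub_sub_self hl, Nat.choose_symm hl]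
  simp [Nat.cast_sub hl]

theorem eulerianNum_succ_self (m : ℕ) : eulerianNum m (m + 1) = 0 := by
  rw [eulerianNum_eq_sum, ← sum_neg_one_pow_mul_choose_mul_sub_pow m (m + 2)]
  push_cast
  ring_nf

theorem eulerianNum_self {m : ℕ} (hm : m ≠ 0) : eulerianNum m m = 0 := by
  have h := sum_neg_one_pow_mul_choose_mul_sub_pow m (m + 1)
  rw [sum_range_succ] at h
  simpa [eulerianNum_eq_sum, hm] using h

theorem eulerianNum_succ_succ (m j : ℕ) :
    eulerianNum (m + 1) (j + 1) =
      (j + 2) * eulerianNum m (j + 1) + (m - j) * eulerianNum m j := by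
  have hchoose (i : ℕ) : ((m + 2).choose (i + 1) : ℤ) * (j + 1 - i) =
      (j + 2) * (m + 1).choose (i + 1) - (m - j) * (m + 1).choose i := by
    have := cast_choose_succ_right_eq (R := ℤ) (m + 1) i
    push_cast [Nat.choose_succ_succ' (m + 1) i] at this ⊢
    linear_combination -this
  simp only [eulerianNum_eq_sum, mul_sum]
  rw [sum_range_succ' _ (j + 1), sum_range_succ' _ (j + 1)]
  conv_rhs => rw [add_right_comm, ← sum_add_distrib]
  congr 1
  · refine sum_congr rfl fun i _ => ?_
    push_cast
    linear_combination (-1 : ℤ) ^ (i + 1) * ((j : ℤ) + 1 - i) ^ m * hchoose i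
  · simp
    ring

theorem natCast_pow_eq_sum_eulerianNum_mul_choose (m x : ℕ) :
    (x : ℤ) ^ m = ∑ j ∈ range (m + 1), eulerianNum m j * (x + j).choose m := by
  induction m with
  | zero => simp [eulerianNum_zero_right]
  | succ m ih =>
    have hmul (j : ℕ) : (x : ℤ) * (x + j).choose m =
        (j + 1) * (x + j).choose (m + 1) + (m - j) * (x + j + 1).choose (m + 1) := by
      have := cast_choose_succ_right_eq (R := ℤ) (x + j) m
      push_cast [Nat.choose_succ_succ' (x + j) m] at this ⊢
      linear_combination -this
    have hshift :
        ∑ j ∈ range (m + 1), ((j + 1) * eulerianNum m j : ℤ) * (x + j).choose (m + 1) =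
          (x.choose (m + 1) : ℤ) + ∑ j ∈ range (m + 1),
            ((j + 2) * eulerianNum m (j + 1) : ℤ) * (x + j + 1).choose (m + 1) := by
      rw [sum_range_succ', sum_range_succ _ m, eulerianNum_succ_self, eulerianNum_zero_right]
      push_cast
      simp only [mul_zero, zero_mul, add_zero, ← add_assoc, one_mul]
      rw [add_comm]
      exact congrArg₂ _ rfl (sum_congr rfl fun j _ => by ring)
    calc (x : ℤ) ^ (m + 1)
        = ∑ j ∈ range (m + 1), eulerianNum m j * (x * (x + j).choose m) := by
          rw [pow_succ', ih, mul_sum]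
          exact sum_congr rfl fun j _ => by ring
      _ = ∑ j ∈ range (m + 1), (((j + 1) * eulerianNum m j : ℤ) * (x + j).choose (m + 1) +
            ((m - j) * eulerianNum m j : ℤ) * (x + j + 1).choose (m + 1)) :=
          sum_congr rfl fun j _ => by rw [hmul]; ring
      _ = ∑ j ∈ range (m + 2), eulerianNum (m + 1) j * (x + j).choose (m + 1) := by
          rw [sum_add_distrib, hshift, sum_range_succ' _ (m + 1), eulerianNum_zero_right, add_assoc,
            ← sum_add_distrib, add_comm]
          simp only [eulerianNum_succ_succ, one_mul, add_zero, ← add_assoc]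
          exact congrArg₂ _ (sum_congr rfl fun j _ => by ring) rfl

theorem fwdDiff_iter_choose_add_apply_zero (n k j : ℕ) :
    (fwdDiff 1)^[n] (fun x : ℕ ↦ ((x + j).choose (n + k) : ℤ)) 0 = j.choose k := by
  rw [fwdDiff_iter_comp_add (f := fun x : ℕ ↦ (x.choose (n + k) : ℤ)), fwdDiff_iter_choose,
    zero_add]

theorem sum_eulerianNum_mul_choose {n : ℕ} (hn : n ≠ 0) (k : ℕ) :
    ∑ j ∈ range (n + k), eulerianNum (n + k) j * j.choose k =
      n ! * Nat.stirlingSecond (n + k) n := by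
  have hworpitzky : (fun x : ℕ ↦ (x : ℤ) ^ (n + k)) = ∑ j ∈ range (n + k + 1),
      eulerianNum (n + k) j • fun x : ℕ ↦ ((x + j).choose (n + k) : ℤ) := by
    ext x
    simp [natCast_pow_eq_sum_eulerianNum_mul_choose]
  calc ∑ j ∈ range (n + k), eulerianNum (n + k) j * j.choose k
      = ∑ j ∈ range (n + k + 1), eulerianNum (n + k) j * j.choose k := by
        rw [sum_range_succ, eulerianNum_self (by omega), zero_mul, add_zero]
    _ = (fwdDiff 1)^[n] (fun x : ℕ ↦ (x : ℤ) ^ (n + k)) 0 := by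
        rw [hworpitzky, fwdDiff_iter_finsetSum, Finset.sum_apply]
        simp only [fwdDiff_iter_const_smul, Pi.smul_apply, fwdDiff_iter_choose_add_apply_zero,
          smul_eq_mul]
    _ = n ! * Nat.stirlingSecond (n + k) n := fwdDiff_iter_natCast_pow_apply_zero _ _

theorem bernoulliNegOrder_eq_sum_eulerian_general (n k : ℕ) (hn : 1 ≤ n) :
    bernoulliNegOrder n k =
      (1 / ((n.factorial : ℚ) * ((n + k).choose k : ℚ))) *
        ∑ j ∈ Finset.range (n + k), (eulerianNum (n + k) j : ℚ) * (j.choose k : ℚ) := by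
  have hE := congrArg (Int.cast : ℤ → ℚ) (sum_eulerianNum_mul_choose (by omega : n ≠ 0) k)
  push_cast at hE
  have hC : ((n + k).choose k : ℚ) ≠ 0 :=
    Nat.cast_ne_zero.2 (Nat.choose_pos (Nat.le_add_left k n)).ne'
  rw [hE, ← choose_mul_bernoulliNegOrder]
  field_simp

theorem bernoulliNegOrder_eq_sum_eulerian (n k : ℕ) (hn : 1 ≤ n) (hk : k ≤ n - 1) :
    bernoulliNegOrder n k =
      (1 / ((n.factorial : ℚ) * ((n + k).choose k : ℚ))) *
        ∑ j ∈ Finset.range (n + k), (eulerianNum (n + k) j : ℚ) * (j.choose k : ℚ) :=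
  bernoulliNegOrder_eq_sum_eulerian_general n k hn
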